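/- arXiv:2401.07504 — 6 statements merged into one kernel-verified Lean document; each statement's English description precedes it below -/
import Mathlib

section
/- Let A be a unital ring that is an algebra over ℝ, let q ∈ (-1,1) and r ∈ ℝ be scalars, and let a, b ∈ A satisfy the q-commutation relation b·a = r·1 + q·(a·b). Then for all integers n ≥ 1 and 1 ≤ m ≤ n one has b^m · a^n = ([n]_q!/[n-m]_q!) · r^m · a^{n-m} + ∑_{k=0}^{m-1} ([n]_q!/[n-k]_q!) · q^{n-k} · r^k · (b^{m-k-1} · a^{n-k} · b). -/
/-- The `q`-number `[n]_q = ∑_{j=0}^{n-1} q^j`. -/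
def qNum (q : ℝ) (n : ℕ) : ℝ := ∑ j ∈ Finset.range n, q ^ j

/-- The `q`-factorial `[n]_q! = ∏_{j=1}^n [j]_q`. -/
def qFact (q : ℝ) (n : ℕ) : ℝ := ∏ j ∈ Finset.range n, qNum q (j + 1)

lemma qNum_pos {q : ℝ} (hq : q ∈ Set.Ioo (-1:ℝ) 1) (n : ℕ) (hn : 1 ≤ n) :
    0 < qNum q n := by
  obtain ⟨h1, h2⟩ := hq
  have hq1 : q ≠ 1 := by linarith
  rw [qNum, geom_sum_eq hq1]
  have hqn : |q| < 1 := abs_lt.mpr ⟨h1, h2⟩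
  have h3 : |q ^ n| < 1 := by
    rw [abs_pow]; exact pow_lt_one₀ (abs_nonneg q) hqn (by omega)
  have h4 := abs_lt.mp h3
  exact div_pos_iff.mpr (Or.inr ⟨by linarith [h4.2], by linarith⟩)

lemma qFact_pos {q : ℝ} (hq : q ∈ Set.Ioo (-1:ℝ) 1) (n : ℕ) : 0 < qFact q n :=
  Finset.prod_pos fun j _ => qNum_pos hq (j+1) (by omega)

lemma qFact_succ (q : ℝ) (n : ℕ) : qFact q (n+1) = qFact q n * qNum q (n+1) :=
  Finset.prod_range_succ _ _

lemma qFact_pred {q : ℝ} (n : ℕ) (hn : 1 ≤ n) :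
    qFact q n = qFact q (n-1) * qNum q n := by
  conv_lhs => rw [show n = (n-1)+1 by omega]
  rw [qFact_succ, show n-1+1 = n by omega]

lemma qNum_succ (q : ℝ) (n : ℕ) : qNum q (n+1) = 1 + q * qNum q n := by
  rw [qNum, qNum, Finset.sum_range_succ', Finset.mul_sum]
  simp [pow_succ, mul_comm, add_comm]

lemma base_lemma {A : Type*} [Ring A] [Algebra ℝ A] {q r : ℝ} {a b : A}
    (hcomm : b * a = r • (1:A) + q • (a*b)) :
    ∀ n : ℕ, b * a ^ n = (qNum q n * r) • a ^ (n-1) + (q ^ n) • (a ^ n * b) := by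
  intro n
  induction n with
  | zero => simp [qNum]
  | succ n ih =>
    by_cases hn : n = 0
    · subst hn; simpa [qNum] using hcomm
    · have h1 : a * a ^ (n-1) = a ^ n := by
        rw [← pow_succ']; congr 1; omega
      calc b * a ^ (n+1) = (b * a) * a ^ n := by rw [pow_succ', ← mul_assoc]
        _ = (r • (1:A) + q • (a*b)) * a ^ n := by rw [hcomm]
        _ = r • a ^ n + q • (a * (b * a ^ n)) := by
            rw [add_mul, smul_mul_assoc, smul_mul_assoc, one_mul, mul_assoc]
        _ = _ := by
            rw [ih, mul_add, mul_smul_comm, mul_smul_comm, h1, ← mul_assoc,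
              ← pow_succ', smul_add, smul_smul, smul_smul, Nat.add_sub_cancel,
              ← add_assoc, ← add_smul]
            congr 2
            · rw [qNum_succ]; ring
            · ring

/-- Abstract form of Lemma 3.1: if `b·a = r·1 + q·(a·b)`, then for `1 ≤ m ≤ n`,
`b^m a^n = ([n]_q!/[n-m]_q!) r^m a^{n-m}
  + ∑_{k=0}^{m-1} ([n]_q!/[n-k]_q!) q^{n-k} r^k b^{m-k-1} a^{n-k} b`. -/
theorem stmt0 (A : Type*) [Ring A] [Algebra ℝ A]
    (q r : ℝ) (hq : q ∈ Set.Ioo (-1 : ℝ) 1)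
    (a b : A) (hcomm : b * a = r • (1 : A) + q • (a * b)) :
    ∀ n m : ℕ, 1 ≤ n → 1 ≤ m → m ≤ n →
      b ^ m * a ^ n
        = (qFact q n / qFact q (n - m) * r ^ m) • a ^ (n - m)
          + ∑ k ∈ Finset.range m,
              (qFact q n / qFact q (n - k) * q ^ (n - k) * r ^ k) •
                (b ^ (m - k - 1) * a ^ (n - k) * b) := by
  intro n m hn
  induction m with
  | zero => intro h; omega
  | succ m ih =>
    intro _ hmn
    by_cases hm : m = 0
    · subst hm
      have hne : qNum q n ≠ 0 := ne_of_gt (qNum_pos hq n hn)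
      have hne' : qFact q (n-1) ≠ 0 := ne_of_gt (qFact_pos hq (n-1))
      rw [pow_one, base_lemma hcomm n, Finset.sum_range_one]
      have e : (0:ℕ)+1-0-1 = 0 := rfl
      rw [e, Nat.sub_zero, pow_zero (b:A), one_mul, pow_one, pow_zero r, mul_one,
        div_self (ne_of_gt (qFact_pos hq n)), one_mul]
      congr 2
      rw [qFact_pred n hn]; field_simp [hne, hne']
    · have hm1 : 1 ≤ m := by omega
      have ihm := ih hm1 (by omega)
      have hnm1 : 1 ≤ n - m := by omega
      have hbb : ∀ k, k < m → b * b ^ (m - k - 1) = b ^ (m - k) := by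
        intro k hk
        rw [← pow_succ']; congr 1; omega
      have hfact : qFact q (n-m) = qFact q (n-m-1) * qNum q (n-m) :=
        qFact_pred (n-m) hnm1
      have hne : qNum q (n-m) ≠ 0 := ne_of_gt (qNum_pos hq (n-m) hnm1)
      have hne1 : qFact q (n-m-1) ≠ 0 := ne_of_gt (qFact_pos hq (n-m-1))
      have e1 : n - m - 1 = n - (m+1) := by omega
      have e2 : m + 1 - m - 1 = 0 := by omega
      calc b ^ (m+1) * a ^ n = b * (b ^ m * a ^ n) := by
            rw [pow_succ', mul_assoc]
        _ = (qFact q n / qFact q (n - m) * r ^ m) • (b * a ^ (n-m))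
            + ∑ k ∈ Finset.range m,
                (qFact q n / qFact q (n - k) * q ^ (n - k) * r ^ k) •
                  (b ^ (m - k) * a ^ (n - k) * b) := by
            rw [ihm, mul_add, mul_smul_comm, Finset.mul_sum]
            congr 1
            apply Finset.sum_congr rfl
            intro k hk
            rw [mul_smul_comm, ← mul_assoc, ← mul_assoc,
              hbb k (Finset.mem_range.mp hk)]
        _ = _ := by
            rw [base_lemma hcomm (n-m), smul_add, smul_smul, smul_smul,
              Finset.sum_range_succ, e1, e2, pow_zero (b:A), one_mul]
            have c1 : qFact q n / qFact q (n - m) * r ^ m * (qNum q (n-m) * r)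
                = qFact q n / qFact q (n-(m+1)) * r^(m+1) := by
              rw [← e1, hfact]; field_simp [hne, hne1]; ring
            have c2 : qFact q n / qFact q (n - m) * r ^ m * q ^ (n-m)
                = qFact q n / qFact q (n - m) * q ^ (n-m) * r ^ m := by ring
            have c3 : ∑ k ∈ Finset.range m,
                  (qFact q n / qFact q (n - k) * q ^ (n - k) * r ^ k) •
                    (b ^ (m - k) * a ^ (n - k) * b)
                = ∑ k ∈ Finset.range m,
                  (qFact q n / qFact q (n - k) * q ^ (n - k) * r ^ k) •
                    (b ^ (m + 1 - k - 1) * a ^ (n - k) * b) :=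
              Finset.sum_congr rfl fun k hk => by
                rw [show m + 1 - k - 1 = m - k by omega]
            rw [c1, c2, c3]
            abel
end

section
/- Let A be a unital C*-algebra, q ∈ (-1,1), u, v > 0 real numbers, and a, c ∈ A satisfying: (i) (star a)·a = u²·1 + q·(a·(star a)); (ii) (star a)·c = q·(c·(star a)); (iii) ‖a^p‖ ≤ C_q·(1-q)^{-p/2}·u^p and ‖c^p‖ ≤ C_q·(1-q)^{-p/2}·v^p for all integers p ≥ 1. Then for all integers m > n ≥ 1 and ℓ ≥ 1 there exists Y ∈ A such that (star a)^m · a^n · c^ℓ = q^ℓ·Y and ‖Y‖ ≤ (C_q^3 + C_q^7/(1-|q|))·(1-q)^{-(m+n+ℓ)/2}·u^{m+n}·v^ℓ. -/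
/-!
Iterating `a⋆ a = u² + q a a⋆` puts `a⋆ ^ m * a ^ n` in normal order,
`∑ₖ wₖ a ^ (n - k) a⋆ ^ (m - k)` with
`wₖ = u^(2k) q^((m-k)(n-k)) [m choose k]_q [n]_q! / [n-k]_q!`.
Since `k ≤ n < m`, every term keeps a factor `a⋆` on the right, and moving `a⋆ ^ (m - k)` past
`c ^ ℓ` produces `q ^ ((m - k) ℓ)`, which contains `q ^ ℓ`. For the norm, `|wₖ|` is at most
`C_q² (u² / (1 - q))^k |q|^(n-k)`, the three power bounds contribute `C_q³`, and the factors
`|q|^(n-k)` sum to at most `1 / (1 - |q|)`.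
-/

/-- The constant `C_q = ∏_{j=1}^∞ (1-|q|^j)^{-1}`. -/
noncomputable def Cq (q : ℝ) : ℝ := ∏' j : ℕ, (1 - |q| ^ (j + 1))⁻¹

open Finset

section QCommutation

variable {R A : Type*} [CommRing R] [Ring A] [Algebra R A] {q s : R} {x y z : A}

def qInt (q : R) (n : ℕ) : R := ∑ j ∈ range n, q ^ j

theorem mul_pow_of_mul_eq_smul (h : y * z = q • (z * y)) (l : ℕ) :
    y * z ^ l = q ^ l • (z ^ l * y) := by
  induction l with
  | zero => simp
  | succ l ih =>
    rw [pow_succ, ← mul_assoc, ih, smul_mul_assoc, mul_assoc, h, mul_smul_comm, smul_smul,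
      ← mul_assoc, ← pow_succ, ← pow_succ]

theorem pow_mul_pow_of_mul_eq_smul (h : y * z = q • (z * y)) (p l : ℕ) :
    y ^ p * z ^ l = q ^ (p * l) • (z ^ l * y ^ p) := by
  induction p with
  | zero => simp
  | succ p ih =>
    rw [pow_succ', mul_assoc, ih, mul_smul_comm, ← mul_assoc, mul_pow_of_mul_eq_smul h,
      smul_mul_assoc, smul_smul, mul_assoc, ← pow_succ', ← pow_add, add_one_mul]

theorem mul_pow_succ_of_mul_eq (h : y * x = s • 1 + q • (x * y)) (n : ℕ) :
    y * x ^ (n + 1) = (s * qInt q (n + 1)) • x ^ n + q ^ (n + 1) • (x ^ (n + 1) * y) := by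
  induction n with
  | zero => simpa [qInt] using h
  | succ n ih =>
    have hqInt : qInt q (n + 1 + 1) = q * qInt q (n + 1) + 1 := geom_sum_succ
    rw [pow_succ' x (n + 1), ← mul_assoc, h, add_mul, smul_mul_assoc, smul_mul_assoc, one_mul,
      mul_assoc, ih, hqInt]
    simp only [mul_add, mul_smul_comm, ← mul_assoc, ← pow_succ']
    module

-- The recursion is `y^(m+1) x^(n+1) = y^m (y x^(n+1))` expanded by `mul_pow_succ_of_mul_eq`.
def wickCoeff (q s : R) : ℕ → ℕ → ℕ → R
  | 0, _, k => if k = 0 then 1 else 0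
  | _ + 1, 0, k => if k = 0 then 1 else 0
  | m + 1, n + 1, 0 => q ^ (n + 1) * wickCoeff q s m (n + 1) 0
  | m + 1, n + 1, k + 1 =>
      s * qInt q (n + 1) * wickCoeff q s m n k + q ^ (n + 1) * wickCoeff q s m (n + 1) (k + 1)

theorem wickCoeff_eq_zero_of_lt {m k : ℕ} (n : ℕ) (h : m < k) : wickCoeff q s m n k = 0 := by
  induction m generalizing n k with
  | zero => simp [wickCoeff, Nat.ne_zero_of_lt h]
  | succ m ih =>
    obtain ⟨k, rfl⟩ := Nat.exists_eq_add_one_of_ne_zero (Nat.ne_zero_of_lt h)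
    cases n with
    | zero => simp [wickCoeff]
    | succ n => simp [wickCoeff, ih _ (Nat.lt_of_add_lt_add_right h), ih _ (Nat.lt_of_succ_lt h)]

theorem pow_mul_pow_eq_sum_wickCoeff (h : y * x = s • 1 + q • (x * y)) (m n : ℕ) :
    y ^ m * x ^ n = ∑ k ∈ range (n + 1), wickCoeff q s m n k • (x ^ (n - k) * y ^ (m - k)) := by
  induction m generalizing n with
  | zero => simp [wickCoeff]
  | succ m ih =>
    cases n with
    | zero => simp [wickCoeff]
    | succ n =>
      have hshift : y ^ m * x ^ (n + 1) * y = ∑ k ∈ range (n + 2),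
          wickCoeff q s m (n + 1) k • (x ^ (n + 1 - k) * y ^ (m + 1 - k)) := by
        rw [ih, sum_mul]
        refine sum_congr rfl fun k _ => ?_
        rcases le_or_gt k m with hk | hk
        · rw [smul_mul_assoc, mul_assoc, ← pow_succ, Nat.sub_add_comm hk]
        · simp [wickCoeff_eq_zero_of_lt _ hk]
      calc y ^ (m + 1) * x ^ (n + 1)
          = (s * qInt q (n + 1)) • (y ^ m * x ^ n) + q ^ (n + 1) • (y ^ m * x ^ (n + 1) * y) := by
            rw [pow_succ, mul_assoc, mul_pow_succ_of_mul_eq h, mul_add, mul_smul_comm,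
              mul_smul_comm, mul_assoc]
        _ = _ := by
            rw [ih, hshift, sum_range_succ' _ (n + 1), sum_range_succ' _ (n + 1)]
            simp only [Nat.add_sub_add_right, Nat.sub_zero, wickCoeff, add_smul, mul_smul,
              smul_sum, sum_add_distrib, smul_add]
            abel

def wickQuotient (q s : R) (x y z : A) (m n ℓ : ℕ) : A :=
  ∑ k ∈ range (n + 1),
    (wickCoeff q s m n k * q ^ ((m - k - 1) * ℓ)) • (x ^ (n - k) * (z ^ ℓ * y ^ (m - k)))

theorem pow_mul_pow_mul_pow_eq_smul_wickQuotient (h : y * x = s • 1 + q • (x * y))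
    (hz : y * z = q • (z * y)) {m n : ℕ} (hnm : n < m) (ℓ : ℕ) :
    y ^ m * x ^ n * z ^ ℓ = q ^ ℓ • wickQuotient q s x y z m n ℓ := by
  rw [pow_mul_pow_eq_sum_wickCoeff h, sum_mul, wickQuotient, smul_sum]
  refine sum_congr rfl fun k hk => ?_
  obtain ⟨j, hj⟩ : ∃ j, m - k = j + 1 := ⟨m - k - 1, by grind⟩
  rw [smul_mul_assoc, mul_assoc, pow_mul_pow_of_mul_eq_smul hz, mul_smul_comm, smul_smul,
    smul_smul, hj, Nat.add_sub_cancel, add_one_mul, pow_add]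
  congr 1
  ring

end QCommutation

section Bounds

variable {q s t : ℝ}

lemma one_sub_pow_succ_pos (ht0 : 0 ≤ t) (ht1 : t < 1) (i : ℕ) : 0 < 1 - t ^ (i + 1) :=
  sub_pos.2 (pow_lt_one₀ ht0 ht1 i.succ_ne_zero)

lemma one_le_inv_one_sub_pow_succ (ht0 : 0 ≤ t) (ht1 : t < 1) (i : ℕ) :
    1 ≤ (1 - t ^ (i + 1))⁻¹ :=
  one_le_inv₀ (one_sub_pow_succ_pos ht0 ht1 i) |>.2 (sub_le_self _ (by positivity))

lemma abs_qInt_succ_le (hq : |q| < 1) (n : ℕ) :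
    |qInt q (n + 1)| ≤ (1 - |q| ^ (n + 1))⁻¹ / (1 - q) := by
  have h1q : 0 < 1 - q := by linarith [le_abs_self q]
  have hpos := one_sub_pow_succ_pos (abs_nonneg q) hq n
  rw [le_div_iff₀ h1q, ← abs_of_pos h1q, ← abs_mul, qInt, geom_sum_mul_neg]
  calc |1 - q ^ (n + 1)| ≤ 1 + |q| ^ (n + 1) := by
        simpa [abs_pow] using abs_sub (1 : ℝ) (q ^ (n + 1))
    _ ≤ (1 - |q| ^ (n + 1))⁻¹ := by
      rw [← one_div, le_div_iff₀ hpos]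
      nlinarith [pow_nonneg (abs_nonneg q) (n + 1)]

noncomputable def invQPochhammer (t : ℝ) (k : ℕ) : ℝ := ∏ i ∈ range k, (1 - t ^ (i + 1))⁻¹

@[simp]
lemma invQPochhammer_zero (t : ℝ) : invQPochhammer t 0 = 1 :=
  prod_range_zero _

lemma one_le_invQPochhammer (ht0 : 0 ≤ t) (ht1 : t < 1) (k : ℕ) : 1 ≤ invQPochhammer t k :=
  one_le_prod fun i _ => one_le_inv_one_sub_pow_succ ht0 ht1 i

lemma invQPochhammer_pos (ht0 : 0 ≤ t) (ht1 : t < 1) (k : ℕ) : 0 < invQPochhammer t k :=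
  one_pos.trans_le (one_le_invQPochhammer ht0 ht1 k)

lemma invQPochhammer_succ (t : ℝ) (k : ℕ) :
    invQPochhammer t (k + 1) = invQPochhammer t k * (1 - t ^ (k + 1))⁻¹ :=
  prod_range_succ _ _

lemma invQPochhammer_add_pow_mul_invQPochhammer_succ (ht0 : 0 ≤ t) (ht1 : t < 1) (k : ℕ) :
    invQPochhammer t k + t ^ (k + 1) * invQPochhammer t (k + 1) = invQPochhammer t (k + 1) := by
  have := (one_sub_pow_succ_pos ht0 ht1 k).ne'
  rw [invQPochhammer_succ]
  field_simp
  ring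

lemma invQPochhammer_le_Cq (hq : |q| < 1) (k : ℕ) : invQPochhammer |q| k ≤ Cq q := by
  have hpos (j : ℕ) : 0 < (1 - |q| ^ (j + 1))⁻¹ :=
    inv_pos.2 (one_sub_pow_succ_pos (abs_nonneg q) hq j)
  have hlog : Summable fun j : ℕ => Real.log ((1 - |q| ^ (j + 1))⁻¹) := by
    have := (Real.summable_log_one_add_of_summable
      ((summable_geometric_of_lt_one (abs_nonneg q) hq).mul_left (-|q|))).neg
    simpa [Real.log_inv, pow_succ', sub_eq_add_neg] using this
  rw [Cq, ← Real.rexp_tsum_eq_tprod hpos hlog, invQPochhammer,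
    ← Real.exp_log (prod_pos fun j _ => hpos j), Real.log_prod fun j _ => (hpos j).ne']
  exact Real.exp_le_exp.2 <| hlog.sum_le_tsum _ fun j _ =>
    Real.log_nonneg (one_le_inv_one_sub_pow_succ (abs_nonneg q) hq j)

lemma one_le_Cq (hq : |q| < 1) : 1 ≤ Cq q :=
  (one_le_invQPochhammer (abs_nonneg q) hq 0).trans (invQPochhammer_le_Cq hq 0)

lemma sub_mul_sub_add_succ_le {m n k : ℕ} (hkn : k ≤ n) :
    (m - k) * (n - k) + (k + 1) ≤ n + 1 + (m - (k + 1)) * (n - k) := by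
  rcases Nat.eq_zero_or_pos (m - k) with h | h
  · rw [h, Nat.sub_eq_zero_of_le (by omega : m ≤ k + 1)]
    omega
  · obtain ⟨j, hj⟩ : ∃ j, m - k = j + 1 := ⟨m - k - 1, by omega⟩
    rw [hj, show m - (k + 1) = j by omega, add_one_mul]
    omega

-- `P n / P (n - k)` dominates `∏_{i<k} |1 - q^(n-i)|`, and `|q|^((m-k)(n-k)) P k` dominates
-- `|q^((m-k)(n-k)) [m choose k]_q|`, where `P = invQPochhammer |q|`.
noncomputable def wickMajorant (q s : ℝ) (m n k : ℕ) : ℝ :=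
  (s / (1 - q)) ^ k * (invQPochhammer |q| n / invQPochhammer |q| (n - k)) *
    |q| ^ ((m - k) * (n - k)) * invQPochhammer |q| k

lemma wickMajorant_nonneg (hq : |q| < 1) (hs : 0 ≤ s) (m n k : ℕ) :
    0 ≤ wickMajorant q s m n k := by
  have := div_nonneg hs (by linarith [le_abs_self q] : (0 : ℝ) ≤ 1 - q)
  have := invQPochhammer_pos (abs_nonneg q) hq n
  have := invQPochhammer_pos (abs_nonneg q) hq (n - k)
  have := invQPochhammer_pos (abs_nonneg q) hq k
  unfold wickMajorant
  positivity

lemma wickMajorant_zero_right (hq : |q| < 1) (m n : ℕ) :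
    wickMajorant q s m n 0 = |q| ^ (m * n) := by
  simp [wickMajorant, div_self (invQPochhammer_pos (abs_nonneg q) hq n).ne']

lemma add_le_wickMajorant_succ (hq : |q| < 1) (hs : 0 ≤ s) {m n k : ℕ} (hkn : k ≤ n) :
    s * |qInt q (n + 1)| * wickMajorant q s m n k +
        |q| ^ (n + 1) * wickMajorant q s m (n + 1) (k + 1)
      ≤ wickMajorant q s (m + 1) (n + 1) (k + 1) := by
  set t := |q|
  set P := invQPochhammer t
  set σ := s / (1 - q)
  have ht0 : 0 ≤ t := abs_nonneg q
  have hσ : 0 ≤ σ := div_nonneg hs (by linarith [le_abs_self q])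
  have hP (j : ℕ) : 0 < P j := invQPochhammer_pos ht0 hq j
  have hPn : P (n + 1) = P n * (1 - t ^ (n + 1))⁻¹ := invQPochhammer_succ t n
  have hrec : P k + t ^ (k + 1) * P (k + 1) = P (k + 1) :=
    invQPochhammer_add_pow_mul_invQPochhammer_succ ht0 hq k
  have hexp : t ^ (n + 1 + (m - (k + 1)) * (n - k)) ≤ t ^ ((m - k) * (n - k) + (k + 1)) :=
    pow_le_pow_of_le_one ht0 hq.le (sub_mul_sub_add_succ_le hkn)
  have hM : 0 ≤ σ ^ k * (P n / P (n - k)) * t ^ ((m - k) * (n - k)) * P k :=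
    wickMajorant_nonneg hq hs m n k
  have := hP (n + 1)
  have := hP (n - k)
  have := hP (k + 1)
  simp only [wickMajorant, Nat.add_sub_add_right]
  calc s * |qInt q (n + 1)| * (σ ^ k * (P n / P (n - k)) * t ^ ((m - k) * (n - k)) * P k)
        + t ^ (n + 1) * (σ ^ (k + 1) * (P (n + 1) / P (n - k)) *
          t ^ ((m - (k + 1)) * (n - k)) * P (k + 1))
      ≤ s * ((1 - t ^ (n + 1))⁻¹ / (1 - q)) *
          (σ ^ k * (P n / P (n - k)) * t ^ ((m - k) * (n - k)) * P k)
        + t ^ (n + 1) * (σ ^ (k + 1) * (P (n + 1) / P (n - k)) *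
          t ^ ((m - (k + 1)) * (n - k)) * P (k + 1)) := by
        gcongr
        exact abs_qInt_succ_le hq n
    _ = σ ^ (k + 1) * (P (n + 1) / P (n - k)) *
          (t ^ ((m - k) * (n - k)) * P k + t ^ (n + 1 + (m - (k + 1)) * (n - k)) * P (k + 1)) := by
        rw [hPn]
        ring
    _ ≤ σ ^ (k + 1) * (P (n + 1) / P (n - k)) *
          (t ^ ((m - k) * (n - k)) * P k + t ^ ((m - k) * (n - k) + (k + 1)) * P (k + 1)) := by
        gcongr
    _ = σ ^ (k + 1) * (P (n + 1) / P (n - k)) * t ^ ((m - k) * (n - k)) * P (k + 1) := by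
        rw [pow_add]
        linear_combination σ ^ (k + 1) * (P (n + 1) / P (n - k)) * t ^ ((m - k) * (n - k)) * hrec

theorem abs_wickCoeff_le_wickMajorant (hq : |q| < 1) (hs : 0 ≤ s) {m n k : ℕ} (hkn : k ≤ n) :
    |wickCoeff q s m n k| ≤ wickMajorant q s m n k := by
  induction m generalizing n k with
  | zero =>
    rcases Nat.eq_zero_or_pos k with rfl | hk
    · simp [wickCoeff, wickMajorant_zero_right hq]
    · simpa [wickCoeff, hk.ne'] using wickMajorant_nonneg hq hs 0 n k
  | succ m ih =>
    cases n with
    | zero => simp [Nat.le_zero.1 hkn, wickCoeff, wickMajorant_zero_right hq]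
    | succ n =>
    cases k with
    | zero =>
      rw [wickCoeff, wickMajorant_zero_right hq, abs_mul, abs_pow]
      calc |q| ^ (n + 1) * |wickCoeff q s m (n + 1) 0|
          ≤ |q| ^ (n + 1) * |q| ^ (m * (n + 1)) := by
            gcongr
            simpa [wickMajorant_zero_right hq] using ih (n := n + 1) (k := 0) (Nat.zero_le _)
        _ = |q| ^ ((m + 1) * (n + 1)) := by ring
    | succ k =>
      refine le_trans ?_ (add_le_wickMajorant_succ hq hs (Nat.le_of_succ_le_succ hkn))
      rw [wickCoeff]
      refine (abs_add_le _ _).trans ?_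
      rw [abs_mul, abs_mul, abs_mul, abs_of_nonneg hs, abs_pow]
      gcongr
      exacts [ih (Nat.le_of_succ_le_succ hkn), ih hkn]

theorem abs_wickCoeff_le (hq : |q| < 1) (hs : 0 ≤ s) {m n k : ℕ} (hkn : k ≤ n) (hkm : k < m) :
    |wickCoeff q s m n k| ≤ Cq q ^ 2 * (s / (1 - q)) ^ k * |q| ^ (n - k) := by
  have ht0 : 0 ≤ |q| := abs_nonneg q
  have hP (j : ℕ) : 1 ≤ invQPochhammer |q| j := one_le_invQPochhammer ht0 hq j
  have hσ : 0 ≤ s / (1 - q) := div_nonneg hs (by linarith [le_abs_self q])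
  calc |wickCoeff q s m n k| ≤ wickMajorant q s m n k := abs_wickCoeff_le_wickMajorant hq hs hkn
    _ ≤ (s / (1 - q)) ^ k * Cq q * |q| ^ (n - k) * Cq q := by
        have hPn : invQPochhammer |q| n / invQPochhammer |q| (n - k) ≤ Cq q :=
          (div_le_self (by linarith [hP n]) (hP _)).trans (invQPochhammer_le_Cq hq n)
        have hpow : |q| ^ ((m - k) * (n - k)) ≤ |q| ^ (n - k) :=
          pow_le_pow_of_le_one ht0 hq.le (Nat.le_mul_of_pos_left _ (Nat.sub_pos_of_lt hkm))
        have hPk := invQPochhammer_le_Cq hq k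
        have := invQPochhammer_pos ht0 hq k
        have := one_pos.trans_le (one_le_Cq hq)
        unfold wickMajorant
        gcongr
    _ = _ := by ring

end Bounds

section Norm

variable {A : Type*} [NormedRing A] [NormedAlgebra ℝ A] {q s α β D : ℝ} {x y z : A}

lemma sum_range_pow_sub_le (hq : |q| < 1) (n : ℕ) :
    ∑ k ∈ range (n + 1), |q| ^ (n - k) ≤ 1 / (1 - |q|) := by
  have h := sum_range_reflect (fun j => |q| ^ j) (n + 1)
  simp only [Nat.add_sub_cancel] at h
  rw [h, range_eq_Ico]
  simpa using geom_sum_Ico_le_of_lt_one (abs_nonneg q) hq (m := 0) (n := n + 1)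

theorem norm_wickQuotient_le (hq : |q| < 1) (hs : s = (1 - q) * α ^ 2) (hα : 0 ≤ α)
    (hβ : 0 ≤ β) (hx : ∀ p, ‖x ^ p‖ ≤ D * α ^ p) (hy : ∀ p, ‖y ^ p‖ ≤ D * α ^ p) {ℓ : ℕ}
    (hz : ‖z ^ ℓ‖ ≤ D * β ^ ℓ) {m n : ℕ} (hnm : n < m) :
    ‖wickQuotient q s x y z m n ℓ‖ ≤ Cq q ^ 2 * D ^ 3 / (1 - |q|) * α ^ (m + n) * β ^ ℓ := by
  have h1q : 0 < 1 - q := by linarith [le_abs_self q]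
  have hD : 0 ≤ D := by simpa using (norm_nonneg _).trans (hx 0)
  have hσ : s / (1 - q) = α ^ 2 := by rw [hs]; field_simp
  have hs0 : 0 ≤ s := by rw [hs]; positivity
  have hterm : ∀ k ∈ range (n + 1), ‖(wickCoeff q s m n k * q ^ ((m - k - 1) * ℓ)) •
      (x ^ (n - k) * (z ^ ℓ * y ^ (m - k)))‖ ≤
      Cq q ^ 2 * D ^ 3 * α ^ (m + n) * β ^ ℓ * |q| ^ (n - k) := by
    intro k hk
    have hkn : k ≤ n := Nat.lt_succ_iff.1 (mem_range.1 hk)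
    have hpow : (α ^ 2) ^ k * α ^ (n - k) * α ^ (m - k) = α ^ (m + n) := by
      rw [← pow_mul, ← pow_add, ← pow_add]
      congr 1
      omega
    calc _ ≤ |wickCoeff q s m n k| * 1 * (‖x ^ (n - k)‖ * (‖z ^ ℓ‖ * ‖y ^ (m - k)‖)) := by
          rw [norm_smul, Real.norm_eq_abs, abs_mul, abs_pow]
          gcongr
          · exact pow_le_one₀ (abs_nonneg q) hq.le
          · exact (norm_mul_le _ _).trans (by gcongr; exact norm_mul_le _ _)
      _ ≤ Cq q ^ 2 * (α ^ 2) ^ k * |q| ^ (n - k) * 1 *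
            (D * α ^ (n - k) * (D * β ^ ℓ * (D * α ^ (m - k)))) := by
          have hW := abs_wickCoeff_le hq hs0 hkn (by omega : k < m)
          have := hx (n - k)
          have := hy (m - k)
          rw [← hσ]
          gcongr
      _ = Cq q ^ 2 * D ^ 3 * α ^ (m + n) * β ^ ℓ * |q| ^ (n - k) := by
          rw [← hpow]
          ring
  calc ‖wickQuotient q s x y z m n ℓ‖
      ≤ ∑ k ∈ range (n + 1), Cq q ^ 2 * D ^ 3 * α ^ (m + n) * β ^ ℓ * |q| ^ (n - k) :=
        (norm_sum_le _ _).trans (sum_le_sum hterm)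
    _ ≤ Cq q ^ 2 * D ^ 3 * α ^ (m + n) * β ^ ℓ * (1 / (1 - |q|)) := by
        rw [← mul_sum]
        gcongr
        exact sum_range_pow_sub_le hq n
    _ = _ := by ring

end Norm

lemma CStarRing.norm_one_le_one {A : Type*} [NormedRing A] [StarRing A] [CStarRing A] :
    ‖(1 : A)‖ ≤ 1 := by
  nontriviality A
  exact CStarRing.norm_one.le

lemma Real.rpow_neg_natCast_div_two {x : ℝ} (hx : 0 ≤ x) (p : ℕ) :
    x ^ (-(p : ℝ) / 2) = (x ^ (-1 / 2 : ℝ)) ^ p := by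
  rw [← Real.rpow_mul_natCast hx]
  ring_nf

lemma Cq_pow_five_div_le {q : ℝ} (hq : |q| < 1) :
    Cq q ^ 5 / (1 - |q|) ≤ Cq q ^ 3 + Cq q ^ 7 / (1 - |q|) := by
  have hC := one_le_Cq hq
  have := one_pos.trans_le hC
  have := sub_pos.2 hq
  refine le_add_of_nonneg_of_le (by positivity) ?_
  gcongr
  norm_num

theorem stmt2_general (A : Type*) [NormedRing A] [StarRing A] [CStarRing A]
    [NormedAlgebra ℝ A]
    (q : ℝ) (hq : q ∈ Set.Ioo (-1 : ℝ) 1) (u v : ℝ) (hu : 0 < u) (hv : 0 < v)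
    (a c : A)
    (h1 : star a * a = (u ^ 2) • (1 : A) + q • (a * star a))
    (h2 : star a * c = q • (c * star a))
    (ha : ∀ p : ℕ, 1 ≤ p → ‖a ^ p‖ ≤ Cq q * (1 - q) ^ (-(p : ℝ) / 2) * u ^ p)
    (hc : ∀ p : ℕ, 1 ≤ p → ‖c ^ p‖ ≤ Cq q * (1 - q) ^ (-(p : ℝ) / 2) * v ^ p) :
    ∀ m n ℓ : ℕ, 1 ≤ n → n < m → 1 ≤ ℓ →
      ∃ Y : A,
        (star a) ^ m * a ^ n * c ^ ℓ = (q ^ ℓ) • Y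
        ∧ ‖Y‖ ≤ (Cq q ^ 3 + Cq q ^ 7 / (1 - |q|))
            * (1 - q) ^ (-((m : ℝ) + n + ℓ) / 2) * u ^ (m + n) * v ^ ℓ := by
  intro m n ℓ _ hnm hℓ
  have hq' : |q| < 1 := abs_lt.2 hq
  have h1q : 0 < 1 - q := sub_pos.2 hq.2
  set r := (1 - q) ^ (-1 / 2 : ℝ)
  have hr : 0 ≤ r := Real.rpow_nonneg h1q.le _
  have hscale (p : ℕ) : (1 - q) ^ (-(p : ℝ) / 2) = r ^ p := Real.rpow_neg_natCast_div_two h1q.le p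
  have hs : u ^ 2 = (1 - q) * (r * u) ^ 2 := by
    rw [mul_pow, ← hscale, Nat.cast_ofNat, neg_div_self two_ne_zero, Real.rpow_neg_one]
    field_simp
  have ha' (p : ℕ) : ‖a ^ p‖ ≤ Cq q * (r * u) ^ p := by
    rcases p.eq_zero_or_pos with rfl | hp
    · simpa using CStarRing.norm_one_le_one.trans (one_le_Cq hq')
    · simpa [hscale, mul_pow, mul_assoc] using ha p hp
  have hc' : ‖c ^ ℓ‖ ≤ Cq q * (r * v) ^ ℓ := by simpa [hscale, mul_pow, mul_assoc] using hc ℓ hℓ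
  have hstar (p : ℕ) : ‖star a ^ p‖ ≤ Cq q * (r * u) ^ p := by
    simpa [← star_pow, norm_star] using ha' p
  refine ⟨wickQuotient q (u ^ 2) a (star a) c m n ℓ,
    pow_mul_pow_mul_pow_eq_smul_wickQuotient h1 h2 hnm ℓ, ?_⟩
  rw [show -((m : ℝ) + n + ℓ) / 2 = -((m + n + ℓ : ℕ) : ℝ) / 2 by push_cast; ring, hscale]
  calc _ ≤ Cq q ^ 2 * Cq q ^ 3 / (1 - |q|) * (r * u) ^ (m + n) * (r * v) ^ ℓ :=
        norm_wickQuotient_le hq' hs (by positivity) (by positivity) ha' hstar hc' hnm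
    _ = Cq q ^ 5 / (1 - |q|) * (r ^ (m + n + ℓ) * u ^ (m + n) * v ^ ℓ) := by ring
    _ ≤ (Cq q ^ 3 + Cq q ^ 7 / (1 - |q|)) * (r ^ (m + n + ℓ) * u ^ (m + n) * v ^ ℓ) := by
        gcongr
        exact Cq_pow_five_div_le hq'
    _ = _ := by ring

/-- Abstract form of Corollary 3.3 of the paper. -/
theorem stmt2 (A : Type*) [NormedRing A] [StarRing A] [CStarRing A]
    [NormedAlgebra ℝ A] [CompleteSpace A]
    (q : ℝ) (hq : q ∈ Set.Ioo (-1 : ℝ) 1) (u v : ℝ) (hu : 0 < u) (hv : 0 < v)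
    (a c : A)
    (h1 : star a * a = (u ^ 2) • (1 : A) + q • (a * star a))
    (h2 : star a * c = q • (c * star a))
    (ha : ∀ p : ℕ, 1 ≤ p → ‖a ^ p‖ ≤ Cq q * (1 - q) ^ (-(p : ℝ) / 2) * u ^ p)
    (hc : ∀ p : ℕ, 1 ≤ p → ‖c ^ p‖ ≤ Cq q * (1 - q) ^ (-(p : ℝ) / 2) * v ^ p) :
    ∀ m n ℓ : ℕ, 1 ≤ n → n < m → 1 ≤ ℓ →
      ∃ Y : A,
        (star a) ^ m * a ^ n * c ^ ℓ = (q ^ ℓ) • Y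
        ∧ ‖Y‖ ≤ (Cq q ^ 3 + Cq q ^ 7 / (1 - |q|))
            * (1 - q) ^ (-((m : ℝ) + n + ℓ) / 2) * u ^ (m + n) * v ^ ℓ :=
  stmt2_general A q hq u v hu hv a c h1 h2 ha hc
end

section
/- For any q ∈ (-1,1) and λ ∈ (0,1), the sequence s_n = (1/n)·∑_{m=1}^n ∑_{ℓ=1}^m ∑_{k=0}^{m-1} q^{(m-k)ℓ} · λ^{(k-ℓ)/2} converges to 0 as n → ∞. -/
/-!
The inner double sum `a m` tends to `0`, hence so do its Cesàro means. With `b = |q|` and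
`s = √λ`, the summand has modulus `b ^ ((m - k) ℓ) * s ^ k / s ^ ℓ`. For `ℓ ≤ k` the total
exponent `(m - k) ℓ + (k - ℓ)` is at least `m - 1`, so the summand is at most
`max b s ^ (m - 1)`. For `k < ℓ` one has `(m - k) ℓ ≥ m (ℓ - k)`, so the summand is at most
`(b ^ m / s) ^ (ℓ - k) ≤ b ^ m / s` as soon as `b ^ m ≤ s`. Hence
`|a m| ≤ m² (max b s ^ (m - 1) + b ^ m / s) → 0`.
-/

open Filter Finset Topology

theorem Filter.Tendsto.cesaro_Icc {u : ℕ → ℝ} {l : ℝ} (h : Tendsto u atTop (𝓝 l)) :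
    Tendsto (fun n : ℕ => (n : ℝ)⁻¹ * ∑ m ∈ Icc 1 n, u m) atTop (𝓝 l) := by
  refine ((tendsto_add_atTop_iff_nat 1).2 h).cesaro.congr fun n => ?_
  rw [← Ico_add_one_right_eq_Icc, sum_Ico_eq_sum_range]
  simp only [Nat.add_sub_cancel, add_comm 1]

theorem pow_mul_pow_sub_le_pow_pred {b s c : ℝ} (hb : 0 ≤ b) (hs : 0 ≤ s) (hbc : b ≤ c)
    (hsc : s ≤ c) (hc : c ≤ 1) {m k ℓ : ℕ} (hℓ : 1 ≤ ℓ) (hℓk : ℓ ≤ k) (hkm : k < m) :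
    b ^ ((m - k) * ℓ) * s ^ (k - ℓ) ≤ c ^ (m - 1) := by
  have hc0 : 0 ≤ c := hb.trans hbc
  have hexp : m - 1 ≤ (m - k) * ℓ + (k - ℓ) := by
    have hsplit : (m - k) * ℓ = (m - k - 1) * ℓ + ℓ := by
      rw [← Nat.succ_mul, Nat.succ_eq_add_one, Nat.sub_add_cancel (by omega)]
    have := Nat.le_mul_of_pos_right (m - k - 1) hℓ
    omega
  calc b ^ ((m - k) * ℓ) * s ^ (k - ℓ) ≤ c ^ ((m - k) * ℓ) * c ^ (k - ℓ) :=
        mul_le_mul (pow_le_pow_left₀ hb hbc _) (pow_le_pow_left₀ hs hsc _) (pow_nonneg hs _)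
          (pow_nonneg hc0 _)
    _ = c ^ ((m - k) * ℓ + (k - ℓ)) := (pow_add ..).symm
    _ ≤ c ^ (m - 1) := pow_le_pow_of_le_one hc0 hc hexp

theorem pow_mul_div_pow_sub_le {b s : ℝ} (hb : 0 ≤ b) (hb1 : b ≤ 1) (hs : 0 < s)
    {m k ℓ : ℕ} (hkℓ : k < ℓ) (hℓm : ℓ ≤ m) (hbm : b ^ m ≤ s) :
    b ^ ((m - k) * ℓ) / s ^ (ℓ - k) ≤ b ^ m / s := by
  have hexp : m * (ℓ - k) ≤ (m - k) * ℓ := by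
    have := Nat.mul_le_mul_left k hℓm
    rw [Nat.mul_sub, Nat.sub_mul, mul_comm m k]
    omega
  calc b ^ ((m - k) * ℓ) / s ^ (ℓ - k) ≤ (b ^ m) ^ (ℓ - k) / s ^ (ℓ - k) := by
        rw [← pow_mul]
        exact div_le_div_of_nonneg_right (pow_le_pow_of_le_one hb hb1 hexp) (by positivity)
    _ = (b ^ m / s) ^ (ℓ - k) := (div_pow ..).symm
    _ ≤ b ^ m / s := pow_le_of_le_one (by positivity) ((div_le_one hs).2 hbm) (by omega)

theorem Real.rpow_half_sub_eq_sqrt_pow_div {x : ℝ} (hx : 0 < x) (k ℓ : ℕ) :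
    x ^ (((k : ℝ) - ℓ) / 2) = √x ^ k / √x ^ ℓ := by
  rw [Real.sqrt_eq_rpow, ← Real.rpow_natCast, ← Real.rpow_natCast, ← Real.rpow_mul hx.le,
    ← Real.rpow_mul hx.le, ← Real.rpow_sub hx]
  ring_nf

theorem abs_pow_mul_rpow_half_sub_le {q lam : ℝ} (hq : |q| ≤ 1) (hlam : 0 < lam)
    (hlam1 : lam ≤ 1) {m k ℓ : ℕ} (hℓ : 1 ≤ ℓ) (hℓm : ℓ ≤ m) (hkm : k < m)
    (hqm : |q| ^ m ≤ √lam) :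
    |q ^ ((m - k) * ℓ) * lam ^ (((k : ℝ) - ℓ) / 2)|
      ≤ max |q| √lam ^ (m - 1) + |q| ^ m / √lam := by
  have hs : 0 < √lam := Real.sqrt_pos.2 hlam
  have hc : max |q| √lam ≤ 1 := max_le hq (Real.sqrt_le_one.2 hlam1)
  rw [abs_mul, abs_pow, Real.rpow_half_sub_eq_sqrt_pow_div hlam,
    abs_of_pos (div_pos (pow_pos hs k) (pow_pos hs ℓ))]
  rcases le_or_gt ℓ k with hℓk | hkℓ
  · rw [div_eq_mul_inv, ← pow_sub₀ _ hs.ne' hℓk]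
    have := pow_mul_pow_sub_le_pow_pred (abs_nonneg q) hs.le (le_max_left _ _)
      (le_max_right _ _) hc hℓ hℓk hkm
    have : 0 ≤ |q| ^ m / √lam := by positivity
    linarith
  · rw [show √lam ^ k / √lam ^ ℓ = (√lam ^ (ℓ - k))⁻¹ by
      rw [pow_sub₀ _ hs.ne' hkℓ.le, mul_inv, inv_inv, div_eq_mul_inv, mul_comm], ← div_eq_mul_inv]
    have := pow_mul_div_pow_sub_le (abs_nonneg q) hq hs hkℓ hℓm hqm
    have : 0 ≤ max |q| √lam ^ (m - 1) := pow_nonneg (hs.le.trans (le_max_right _ _)) _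
    linarith

theorem tendsto_sq_mul_pow_pred {c : ℝ} (hc0 : 0 < c) (hc1 : c < 1) :
    Tendsto (fun m : ℕ => (m : ℝ) ^ 2 * c ^ (m - 1)) atTop (𝓝 0) := by
  have h := (tendsto_pow_const_mul_const_pow_of_lt_one 2 hc0.le hc1).div_const c
  rw [zero_div] at h
  refine h.congr' ((eventually_ge_atTop 1).mono fun m hm => ?_)
  simp only [pow_sub₀ _ hc0.ne' hm, pow_one, div_eq_mul_inv, mul_assoc]

theorem tendsto_sum_Icc_sum_range_pow_mul_rpow_half_sub {q lam : ℝ} (hq : |q| < 1)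
    (hlam : 0 < lam) (hlam1 : lam < 1) :
    Tendsto (fun m : ℕ => ∑ ℓ ∈ Icc 1 m, ∑ k ∈ range m,
      q ^ ((m - k) * ℓ) * lam ^ (((k : ℝ) - ℓ) / 2)) atTop (𝓝 0) := by
  set c := max |q| √lam
  have hs : 0 < √lam := Real.sqrt_pos.2 hlam
  have hc1 : c < 1 := max_lt hq (Real.sqrt_one ▸ Real.sqrt_lt_sqrt hlam.le hlam1)
  have hqm : ∀ᶠ m : ℕ in atTop, |q| ^ m ≤ √lam :=
    (tendsto_pow_atTop_nhds_zero_of_lt_one (abs_nonneg q) hq).eventually (ge_mem_nhds hs)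
  have hbound : ∀ᶠ m : ℕ in atTop, ‖∑ ℓ ∈ Icc 1 m, ∑ k ∈ range m,
      q ^ ((m - k) * ℓ) * lam ^ (((k : ℝ) - ℓ) / 2)‖
        ≤ (m : ℝ) ^ 2 * c ^ (m - 1) + (m : ℝ) ^ 2 * |q| ^ m / √lam := by
    filter_upwards [hqm] with m hm
    calc _ ≤ ∑ ℓ ∈ Icc 1 m, ∑ k ∈ range m, (c ^ (m - 1) + |q| ^ m / √lam) := by
          refine norm_sum_le_of_le _ fun ℓ hℓ => norm_sum_le_of_le _ fun k hk => ?_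
          rw [mem_Icc] at hℓ
          exact abs_pow_mul_rpow_half_sub_le hq.le hlam hlam1.le hℓ.1 hℓ.2 (mem_range.1 hk) hm
      _ = _ := by simp only [sum_const, Nat.card_Icc, card_range, nsmul_eq_mul]; push_cast; ring
  have hlim := (tendsto_sq_mul_pow_pred (hs.trans_le (le_max_right _ _)) hc1).add
    ((tendsto_pow_const_mul_const_pow_of_lt_one 2 (abs_nonneg q) hq).div_const √lam)
  rw [zero_div, add_zero] at hlim
  exact squeeze_zero_norm' hbound hlim

/-- Lemma 3.7 of the paper: for `q ∈ (-1,1)` and `λ ∈ (0,1)`, the sequence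
`s_n = (1/n) ∑_{m=1}^n ∑_{ℓ=1}^m ∑_{k=0}^{m-1} q^{(m-k)ℓ} λ^{(k-ℓ)/2}` converges to `0`. -/
theorem stmt7 (q lam : ℝ) (hq : q ∈ Set.Ioo (-1 : ℝ) 1) (hlam : lam ∈ Set.Ioo (0 : ℝ) 1) :
    Tendsto
      (fun n : ℕ => (n : ℝ)⁻¹ *
        ∑ m ∈ Finset.Icc 1 n, ∑ ℓ ∈ Finset.Icc 1 m, ∑ k ∈ Finset.range m,
          q ^ ((m - k) * ℓ) * lam ^ (((k : ℝ) - (ℓ : ℝ)) / 2))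
      atTop (nhds 0) :=
  (tendsto_sum_Icc_sum_range_pow_mul_rpow_half_sub (abs_lt.2 hq) hlam.1 hlam.2).cesaro_Icc
end

section
/- For any q ∈ [0,1) and λ ∈ (0,1), the sequence (1/n)·∑_{m=1}^n ∑_{j=1}^m (m-j+1) · λ^{-j/2} · q^{mj} converges to 0 as n → ∞. -/
open Filter

/-- The estimate controlling the first summand in the proof of Lemma 3.7 of the paper:
for `q ∈ [0,1)` and `λ ∈ (0,1)`, `(1/n) ∑_{m=1}^n ∑_{j=1}^m (m-j+1) λ^{-j/2} q^{mj} → 0`. -/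
theorem stmt8 (q lam : ℝ) (hq : q ∈ Set.Ico (0 : ℝ) 1) (hlam : lam ∈ Set.Ioo (0 : ℝ) 1) :
    Tendsto
      (fun n : ℕ => (n : ℝ)⁻¹ *
        ∑ m ∈ Finset.Icc 1 n, ∑ j ∈ Finset.Icc 1 m,
          ((m - j + 1 : ℕ) : ℝ) * lam ^ (-(j : ℝ) / 2) * q ^ (m * j))
      atTop (nhds 0) := by
  obtain ⟨hq0, hq1⟩ := hq
  obtain ⟨hl0, hl1⟩ := hlam
  set a : ℕ → ℝ := fun m => ∑ j ∈ Finset.Icc 1 m,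
      ((m - j + 1 : ℕ) : ℝ) * lam ^ (-(j : ℝ) / 2) * q ^ (m * j) with ha_def
  set r : ℝ := lam ^ (-(1 : ℝ) / 2) with hr_def
  have hr0 : 0 < r := Real.rpow_pos_of_pos hl0 _
  -- each term is nonnegative
  have hterm_nonneg : ∀ m j : ℕ,
      0 ≤ ((m - j + 1 : ℕ) : ℝ) * lam ^ (-(j : ℝ) / 2) * q ^ (m * j) := fun m j =>
    mul_nonneg (mul_nonneg (Nat.cast_nonneg _) (Real.rpow_pos_of_pos hl0 _).le)
      (pow_nonneg hq0 _)
  have ha_nonneg : ∀ m, 0 ≤ a m := fun m =>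
    Finset.sum_nonneg fun j _ => hterm_nonneg m j
  -- rpow as pow of r
  have hrpow : ∀ j : ℕ, lam ^ (-(j : ℝ) / 2) = r ^ j := by
    intro j
    rw [hr_def, ← Real.rpow_natCast (lam ^ (-(1:ℝ)/2)) j, ← Real.rpow_mul hl0.le]
    ring_nf
  -- limit of the bounding sequence
  have hlim : Tendsto (fun m : ℕ => (2 * r) * ((m : ℝ) * q ^ m)) atTop (nhds 0) := by
    have := (tendsto_self_mul_const_pow_of_lt_one hq0 hq1).const_mul (2 * r)
    simpa using this
  -- eventual bound on `a`
  have hqm : Tendsto (fun m : ℕ => q ^ m) atTop (nhds 0) :=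
    tendsto_pow_atTop_nhds_zero_of_lt_one hq0 hq1
  have hbound : ∀ᶠ m in atTop, a m ≤ (2 * r) * ((m : ℝ) * q ^ m) := by
    have hsmall : ∀ᶠ m in atTop, q ^ m < 1 / (2 * r) :=
      hqm.eventually (eventually_lt_nhds (by positivity))
    filter_upwards [hsmall] with m hm
    have hrq : r * q ^ m ≤ 1 / 2 := by
      rw [lt_div_iff₀ (by positivity)] at hm
      nlinarith
    have hrq0 : 0 ≤ r * q ^ m := by positivity
    calc a m ≤ ∑ j ∈ Finset.Icc 1 m, (m : ℝ) * ((r * q ^ m) * (1/2) ^ (j - 1)) := by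
          apply Finset.sum_le_sum
          intro j hj
          obtain ⟨hj1, hjm⟩ := Finset.mem_Icc.mp hj
          rw [hrpow, pow_mul, mul_assoc, ← mul_pow]
          have h1 : ((m - j + 1 : ℕ) : ℝ) ≤ (m : ℝ) := by
            have : m - j + 1 ≤ m := by omega
            exact_mod_cast this
          have h2 : (r * q ^ m) ^ j ≤ (r * q ^ m) * (1/2) ^ (j - 1) := by
            have : (r * q ^ m) ^ j = (r * q ^ m) * (r * q ^ m) ^ (j - 1) := by
              rw [← pow_succ']
              congr 1
              omega
            rw [this]
            exact mul_le_mul_of_nonneg_left (pow_le_pow_left₀ hrq0 hrq _) hrq0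
          calc ((m - j + 1 : ℕ) : ℝ) * (r * q ^ m) ^ j
              ≤ (m : ℝ) * (r * q ^ m) ^ j :=
                mul_le_mul_of_nonneg_right h1 (pow_nonneg hrq0 _)
            _ ≤ (m : ℝ) * ((r * q ^ m) * (1/2) ^ (j - 1)) :=
                mul_le_mul_of_nonneg_left h2 (Nat.cast_nonneg _)
      _ = (m : ℝ) * (r * q ^ m) * ∑ j ∈ Finset.Icc 1 m, (1/2 : ℝ) ^ (j - 1) := by
          rw [Finset.mul_sum]; congr 1; ext j; ring
      _ ≤ (m : ℝ) * (r * q ^ m) * 2 := by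
          apply mul_le_mul_of_nonneg_left _ (by positivity)
          have : ∑ j ∈ Finset.Icc 1 m, (1/2 : ℝ) ^ (j - 1)
              = ∑ i ∈ Finset.range m, (1/2 : ℝ) ^ i := by
            rw [← Finset.Ico_add_one_right_eq_Icc, Finset.sum_Ico_eq_sum_range]
            simp
          rw [this]
          simpa using sum_geometric_two_le m
      _ = (2 * r) * ((m : ℝ) * q ^ m) := by ring
  have ha : Tendsto a atTop (nhds 0) :=
    squeeze_zero' (Eventually.of_forall ha_nonneg) hbound hlim
  -- Cesàro
  have ha1 : Tendsto (fun i : ℕ => a (1 + i)) atTop (nhds 0) := by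
    have := ha.comp (tendsto_add_atTop_nat 1)
    exact this.congr fun i => by simp [Function.comp, add_comm]
  have := ha1.cesaro
  apply this.congr
  intro n
  congr 1
  rw [← Finset.Ico_add_one_right_eq_Icc, Finset.sum_Ico_eq_sum_range]
  rfl
end

section
/- For any q ∈ (0,1), λ ∈ (0,1) and integer n ≥ 1, one has ∑_{m=1}^n ∑_{j=0}^{m-1} ∑_{k=j+1}^{m-1} q^{(m-k)(k-j)} · λ^{j/2} ≤ (1-√λ)^{-1} · ∑_{k=1}^n q^k/(1-q^k). -/
/-!
Summing first over `m`, then over `k`, and last over `j`: for fixed `j < k` the sum over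
`m > k` is geometric with ratio `q^(k-j)`, hence at most `q^(k-j)/(1-q^(k-j))`; shifting
`k - j ↦ i` bounds the sum over `k` by `∑_{i=1}^n q^i/(1-q^i)`, uniformly in `j`, and
`λ^(j/2) = (√λ)^j` sums to at most `(1-√λ)⁻¹`.
-/

open Finset

lemma sum_Icc_sum_range_sum_Icc_comm {M : Type*} [AddCommMonoid M] (f : ℕ → ℕ → ℕ → M)
    (n : ℕ) :
    ∑ m ∈ Icc 1 n, ∑ j ∈ range m, ∑ k ∈ Icc (j + 1) (m - 1), f m j k
      = ∑ j ∈ range n, ∑ k ∈ Icc (j + 1) n, ∑ m ∈ Icc (k + 1) n, f m j k := by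
  rw [sum_comm' (t' := range n) (s' := fun j => Icc (j + 1) n)
    (fun m j => by simp only [mem_Icc, mem_range]; omega)]
  refine sum_congr rfl fun j _ => sum_comm' fun m k => ?_
  simp only [mem_Icc]
  omega

lemma sum_Icc_comp_sub_le_sum_Icc {M : Type*} [AddCommMonoid M] [PartialOrder M]
    [IsOrderedAddMonoid M] {n : ℕ} {f : ℕ → M} (hf : ∀ i ∈ Icc 1 n, 0 ≤ f i) (j : ℕ) :
    ∑ k ∈ Icc (j + 1) n, f (k - j) ≤ ∑ i ∈ Icc 1 n, f i := calc
  ∑ k ∈ Icc (j + 1) n, f (k - j) ≤ ∑ k ∈ Ico (1 + j) (n + 1 + j), f (k - j) :=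
    sum_le_sum_of_subset_of_nonneg (fun k hk => by simp only [mem_Icc, mem_Ico] at hk ⊢; omega)
      fun k hk _ => hf _ (by simp only [mem_Icc, mem_Ico] at hk ⊢; omega)
  _ = ∑ i ∈ Icc 1 n, f i := by rw [sum_Ico_add_right_sub_eq, Ico_add_one_right_eq_Icc]

lemma sum_Icc_pow_sub_le {K : Type*} [Field K] [LinearOrder K] [IsStrictOrderedRing K] {r : K}
    (h0 : 0 ≤ r) (h1 : r < 1) (k n : ℕ) :
    ∑ m ∈ Icc (k + 1) n, r ^ (m - k) ≤ r / (1 - r) := calc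
  ∑ m ∈ Icc (k + 1) n, r ^ (m - k) ≤ ∑ i ∈ Icc 1 n, r ^ i :=
    sum_Icc_comp_sub_le_sum_Icc (fun i _ => pow_nonneg h0 i) k
  _ ≤ r ^ 1 / (1 - r) := by
    rw [← Ico_add_one_right_eq_Icc]
    exact geom_sum_Ico_le_of_lt_one h0 h1
  _ = r / (1 - r) := by rw [pow_one]

lemma sum_Icc_sum_Icc_pow_mul_le {K : Type*} [Field K] [LinearOrder K] [IsStrictOrderedRing K]
    {q : K} (h0 : 0 ≤ q) (h1 : q < 1) (j n : ℕ) :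
    ∑ k ∈ Icc (j + 1) n, ∑ m ∈ Icc (k + 1) n, q ^ ((m - k) * (k - j))
      ≤ ∑ i ∈ Icc 1 n, q ^ i / (1 - q ^ i) := calc
  ∑ k ∈ Icc (j + 1) n, ∑ m ∈ Icc (k + 1) n, q ^ ((m - k) * (k - j))
      ≤ ∑ k ∈ Icc (j + 1) n, q ^ (k - j) / (1 - q ^ (k - j)) := by
    gcongr with k hk
    simp_rw [mul_comm _ (k - j), pow_mul]
    have hkj : k - j ≠ 0 := by simp only [mem_Icc] at hk; omega
    exact sum_Icc_pow_sub_le (pow_nonneg h0 _) (pow_lt_one₀ h0 h1 hkj) k n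
  _ ≤ ∑ i ∈ Icc 1 n, q ^ i / (1 - q ^ i) :=
    sum_Icc_comp_sub_le_sum_Icc (f := fun i => q ^ i / (1 - q ^ i))
      (fun i _ => div_nonneg (pow_nonneg h0 i) (sub_nonneg.mpr (pow_le_one₀ h0 h1.le))) j

theorem stmt9_general (q lam : ℝ) (hq : q ∈ Set.Ioo (0 : ℝ) 1) (hlam : lam ∈ Set.Ioo (0 : ℝ) 1)
    (n : ℕ) :
    ∑ m ∈ Finset.Icc 1 n, ∑ j ∈ Finset.range m, ∑ k ∈ Finset.Icc (j + 1) (m - 1),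
        q ^ ((m - k) * (k - j)) * lam ^ ((j : ℝ) / 2)
      ≤ (1 - Real.sqrt lam)⁻¹ * ∑ k ∈ Finset.Icc 1 n, q ^ k / (1 - q ^ k) := by
  obtain ⟨hq0, hq1⟩ := hq
  obtain ⟨hl0, hl1⟩ := hlam
  set A := ∑ i ∈ Icc 1 n, q ^ i / (1 - q ^ i)
  have hA : 0 ≤ A := sum_nonneg fun i _ =>
    div_nonneg (pow_nonneg hq0.le i) (sub_nonneg.mpr (pow_le_one₀ hq0.le hq1.le))
  have hs1 : √lam < 1 := by rw [Real.sqrt_lt' one_pos, one_pow]; exact hl1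
  rw [sum_Icc_sum_range_sum_Icc_comm]
  calc ∑ j ∈ range n, ∑ k ∈ Icc (j + 1) n, ∑ m ∈ Icc (k + 1) n,
        q ^ ((m - k) * (k - j)) * lam ^ ((j : ℝ) / 2)
      = ∑ j ∈ range n, (∑ k ∈ Icc (j + 1) n, ∑ m ∈ Icc (k + 1) n,
          q ^ ((m - k) * (k - j))) * √lam ^ j := by
        simp only [sum_mul, Real.rpow_div_two_eq_sqrt _ hl0.le, Real.rpow_natCast]
    _ ≤ ∑ j ∈ range n, A * √lam ^ j := by
        gcongr with j
        exact sum_Icc_sum_Icc_pow_mul_le hq0.le hq1 j n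
    _ = A * ∑ j ∈ range n, √lam ^ j := (mul_sum _ _ _).symm
    _ ≤ A * (1 - √lam)⁻¹ := by
        refine mul_le_mul_of_nonneg_left ?_ hA
        simpa using
          geom_sum_Ico_le_of_lt_one (m := 0) (n := n) (Real.sqrt_nonneg lam) hs1
    _ = (1 - √lam)⁻¹ * A := mul_comm _ _

/-- The estimate on the second summand in the proof of Lemma 3.7 of the paper:
for `q ∈ (0,1)`, `λ ∈ (0,1)` and `n ≥ 1`,
`∑_{m=1}^n ∑_{j=0}^{m-1} ∑_{k=j+1}^{m-1} q^{(m-k)(k-j)} λ^{j/2}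
  ≤ (1-√λ)^{-1} ∑_{k=1}^n q^k/(1-q^k)`. -/
theorem stmt9 (q lam : ℝ) (hq : q ∈ Set.Ioo (0 : ℝ) 1) (hlam : lam ∈ Set.Ioo (0 : ℝ) 1)
    (n : ℕ) (hn : 1 ≤ n) :
    ∑ m ∈ Finset.Icc 1 n, ∑ j ∈ Finset.range m, ∑ k ∈ Finset.Icc (j + 1) (m - 1),
        q ^ ((m - k) * (k - j)) * lam ^ ((j : ℝ) / 2)
      ≤ (1 - Real.sqrt lam)⁻¹ * ∑ k ∈ Finset.Icc 1 n, q ^ k / (1 - q ^ k) :=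
  stmt9_general q lam hq hlam n
end

section
/- For any q ∈ (-1,1) and λ ∈ (0,1), there exists a constant B > 0 (depending only on q and λ) such that for every integer n ≥ 0 one has ∑_{k=0}^n ∑_{ℓ=0}^n |q|^{(n-k)ℓ} · λ^{(k-ℓ)/2} ≤ B. -/
private lemma geomle {x : ℝ} (h0 : 0 ≤ x) (h1 : x < 1) (n : ℕ) :
    ∑ i ∈ Finset.range n, x ^ i ≤ 1 / (1 - x) := by
  have hx : (0:ℝ) < 1 - x := by linarith
  rw [geom_sum_eq (ne_of_lt h1)]
  have h2 : (0:ℝ) ≤ x ^ n := pow_nonneg h0 n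
  have h3 : (x ^ n - 1) / (x - 1) = (1 - x ^ n) / (1 - x) := by
    rw [div_eq_div_iff (by linarith : x - 1 ≠ 0) (ne_of_gt hx)]; ring
  rw [h3]
  gcongr
  linarith

private lemma distsum {x : ℝ} (h0 : 0 ≤ x) (h1 : x < 1) {n k : ℕ} (hk : k ≤ n) :
    ∑ ℓ ∈ Finset.range (n + 1), x ^ (Nat.dist k ℓ) ≤ 2 / (1 - x) := by
  have hs : Finset.range (n+1) = Finset.range (k+1) ∪ Finset.Ico (k+1) (n+1) := by
    simp only [Finset.range_eq_Ico]
    rw [Finset.Ico_union_Ico_eq_Ico (Nat.zero_le _) (by omega)]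
  rw [hs, Finset.sum_union (by
    simp [Finset.disjoint_left]; omega)]
  have h1' : ∑ ℓ ∈ Finset.range (k+1), x ^ (Nat.dist k ℓ) ≤ 1 / (1 - x) := by
    have : ∑ ℓ ∈ Finset.range (k+1), x ^ (Nat.dist k ℓ)
        = ∑ j ∈ Finset.range (k+1), x ^ j := by
      rw [← Finset.sum_range_reflect]
      apply Finset.sum_congr rfl
      intro j hj
      simp only [Finset.mem_range] at hj
      congr 1
      simp [Nat.dist]; omega
    rw [this]; exact geomle h0 h1 _
  have h2' : ∑ ℓ ∈ Finset.Ico (k+1) (n+1), x ^ (Nat.dist k ℓ) ≤ 1 / (1 - x) := by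
    have : ∑ ℓ ∈ Finset.Ico (k+1) (n+1), x ^ (Nat.dist k ℓ)
        ≤ ∑ ℓ ∈ Finset.Ico (k+1) (n+1), x ^ (ℓ - k) := by
      apply Finset.sum_le_sum
      intro ℓ hℓ
      simp only [Finset.mem_Ico] at hℓ
      have : Nat.dist k ℓ = ℓ - k := by simp [Nat.dist]; omega
      rw [this]
    refine this.trans ?_
    rw [Finset.sum_Ico_eq_sum_range]
    have : ∀ i ∈ Finset.range (n+1-(k+1)), x ^ (k+1+i-k) ≤ x ^ i := by
      intro i _
      have : k+1+i-k = i+1 := by omega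
      rw [this, pow_succ]
      nlinarith [pow_nonneg h0 i, pow_le_one₀ h0 h1.le (n := i)]
    refine (Finset.sum_le_sum this).trans ?_
    refine (Finset.sum_le_sum_of_subset_of_nonneg
      (Finset.range_subset_range.mpr (by omega)) ?_).trans (geomle h0 h1 (n+1))
    intro i _ _; positivity
  have h2 : (2:ℝ)/(1-x) = 1/(1-x) + 1/(1-x) := by ring
  linarith

private lemma minsum {x : ℝ} (h0 : 0 ≤ x) (h1 : x < 1) (n : ℕ) :
    ∑ k ∈ Finset.range (n + 1), x ^ (min k (n - k)) ≤ 2 / (1 - x) := by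
  have hpt : ∀ k ∈ Finset.range (n+1),
      x ^ (min k (n-k)) ≤ x ^ k + x ^ (n - k) := by
    intro k _
    rcases le_total k (n-k) with h | h
    · rw [min_eq_left h]
      have := pow_nonneg h0 (n-k)
      linarith
    · rw [min_eq_right h]
      have := pow_nonneg h0 k
      linarith
  refine (Finset.sum_le_sum hpt).trans ?_
  rw [Finset.sum_add_distrib]
  have e1 : ∑ k ∈ Finset.range (n+1), x ^ (n - k) = ∑ k ∈ Finset.range (n+1), x ^ k := by
    rw [← Finset.sum_range_reflect]
    apply Finset.sum_congr rfl
    intro j hj; simp only [Finset.mem_range] at hj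
    congr 1; omega
  rw [e1]
  have := geomle h0 h1 (n+1)
  have h2 : (2:ℝ)/(1-x) = 1/(1-x) + 1/(1-x) := by ring
  linarith
private lemma keylem (r s β : ℝ) (N : ℕ) (hr0 : 0 ≤ r) (hrβ : r ≤ β)
    (hs0 : 0 < s) (hs1 : s ≤ 1) (hβ0 : 0 < β) (hβ1 : β ≤ 1)
    (hN : r ^ N ≤ s ^ 2 * β) {n k ℓ : ℕ} (hk : k ≤ n) (hℓ : ℓ ≤ n) :
    r ^ ((n - k) * ℓ) * (s ^ k / s ^ ℓ) ≤
      ((s ^ 2 * β)⁻¹) ^ N * ((s / β) ^ (Nat.dist k ℓ) * β ^ (min k (n - k))) := by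
  set κ := s ^ 2 * β with hκdef
  set C := (κ⁻¹) ^ N with hCdef
  have hκ0 : 0 < κ := by positivity
  have hκ1 : κ ≤ 1 := by nlinarith
  have hC1 : (1:ℝ) ≤ C := one_le_pow₀ ((one_le_inv₀ hκ0).mpr hκ1)
  have hr1 : r ≤ 1 := hrβ.trans hβ1
  set m0 := min k (n - k) with hm0def
  rcases le_or_gt ℓ k with hlk | hlk
  · -- case ℓ ≤ k
    have hd : Nat.dist k ℓ = k - ℓ := by unfold Nat.dist; omega
    set d := k - ℓ with hddef
    set a := (n - k) * ℓ with hadef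
    have hsd : s ^ k / s ^ ℓ = s ^ d := by
      rw [show k = d + ℓ by omega, pow_add]
      field_simp
    have hnat : m0 ≤ a + d := by
      rcases Nat.eq_zero_or_pos ℓ with h | h
      · omega
      · rcases Nat.eq_zero_or_pos (n - k) with h' | h'
        · omega
        · have hm : n - k ≤ (n - k) * ℓ := Nat.le_mul_of_pos_right _ h
          omega
    have H : r ^ a * β ^ d ≤ C * β ^ m0 := by
      calc r ^ a * β ^ d ≤ β ^ a * β ^ d :=
            mul_le_mul_of_nonneg_right (pow_le_pow_left₀ hr0 hrβ a) (by positivity)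
        _ = β ^ (a + d) := (pow_add β a d).symm
        _ ≤ β ^ m0 := pow_le_pow_of_le_one hβ0.le hβ1 hnat
        _ ≤ C * β ^ m0 := le_mul_of_one_le_left (by positivity) hC1
    rw [hd, hsd]
    calc r ^ a * s ^ d = (r ^ a * β ^ d) * (s ^ d / β ^ d) := by
          field_simp
      _ ≤ (C * β ^ m0) * (s ^ d / β ^ d) :=
          mul_le_mul_of_nonneg_right H (by positivity)
      _ = C * ((s / β) ^ d * β ^ m0) := by rw [div_pow]; ring
  · -- case k < ℓ
    have hd : Nat.dist k ℓ = ℓ - k := by unfold Nat.dist; omega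
    set d := ℓ - k with hddef
    set a := (n - k) * ℓ with hadef
    set e := min (n - k) ℓ with hedef
    have hde : d ≤ e := le_min (by omega) (by omega)
    have hm0e : m0 ≤ e :=
      le_min ((min_le_right k (n - k))) ((min_le_left k (n - k)).trans (by omega))
    have hae : e * e ≤ a := Nat.mul_le_mul (min_le_left _ _) (min_le_right _ _)
    have hsplit : s ^ k / s ^ ℓ = 1 / s ^ d := by
      rw [show ℓ = k + d by omega, pow_add]
      rw [one_div, ← div_div]
      field_simp
    have hinner : r ^ (e * e) ≤ C * κ ^ e := by
      rcases le_or_gt N e with h | h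
      · calc r ^ (e * e) ≤ r ^ (N * e) :=
              pow_le_pow_of_le_one hr0 hr1 (Nat.mul_le_mul_right e h)
          _ = (r ^ N) ^ e := by rw [pow_mul]
          _ ≤ κ ^ e := pow_le_pow_left₀ (by positivity) hN e
          _ ≤ C * κ ^ e := le_mul_of_one_le_left (by positivity) hC1
      · have h1 : r ^ (e * e) ≤ 1 := pow_le_one₀ hr0 hr1
        have h2 : κ ^ N ≤ κ ^ e := pow_le_pow_of_le_one hκ0.le hκ1 h.le
        have h3 : C * κ ^ N = 1 := by
          rw [hCdef, ← mul_pow, inv_mul_cancel₀ (ne_of_gt hκ0), one_pow]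
        calc r ^ (e * e) ≤ 1 := h1
          _ = C * κ ^ N := h3.symm
          _ ≤ C * κ ^ e := mul_le_mul_of_nonneg_left h2 (by positivity)
    have hκe : κ ^ e ≤ s ^ d * (s ^ d * β ^ m0) := by
      calc κ ^ e = s ^ (2 * e) * β ^ e := by
            rw [hκdef, mul_pow, ← pow_mul]
        _ ≤ s ^ (2 * d) * β ^ m0 :=
            mul_le_mul (pow_le_pow_of_le_one hs0.le hs1 (by omega))
              (pow_le_pow_of_le_one hβ0.le hβ1 hm0e) (by positivity) (by positivity)
        _ = s ^ d * (s ^ d * β ^ m0) := by rw [two_mul, pow_add]; ring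
    have H : r ^ a * β ^ d ≤ C * (s ^ d * (s ^ d * β ^ m0)) := by
      calc r ^ a * β ^ d ≤ r ^ (e * e) * 1 :=
            mul_le_mul (pow_le_pow_of_le_one hr0 hr1 hae)
              (pow_le_one₀ hβ0.le hβ1) (by positivity) (by positivity)
        _ = r ^ (e * e) := mul_one _
        _ ≤ C * κ ^ e := hinner
        _ ≤ C * (s ^ d * (s ^ d * β ^ m0)) := mul_le_mul_of_nonneg_left hκe (by positivity)
    rw [hd, hsplit]
    have hpos : (0:ℝ) < s ^ d * β ^ d := by positivity
    calc r ^ a * (1 / s ^ d) = (r ^ a * β ^ d) / (s ^ d * β ^ d) := by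
          field_simp
      _ ≤ (C * (s ^ d * (s ^ d * β ^ m0))) / (s ^ d * β ^ d) := by gcongr
      _ = C * ((s / β) ^ d * β ^ m0) := by rw [div_pow]; field_simp

/-- The uniform bound recorded in the proof of Lemma 3.4 of the paper: for `q ∈ (-1,1)`
and `λ ∈ (0,1)` there is a constant `B > 0` with
`∑_{k=0}^n ∑_{ℓ=0}^n |q|^{(n-k)ℓ} λ^{(k-ℓ)/2} ≤ B` for every `n ≥ 0`. -/
theorem stmt11 (q lam : ℝ) (hq : q ∈ Set.Ioo (-1 : ℝ) 1) (hlam : lam ∈ Set.Ioo (0 : ℝ) 1) :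
    ∃ B : ℝ, 0 < B ∧ ∀ n : ℕ,
      ∑ k ∈ Finset.range (n + 1), ∑ ℓ ∈ Finset.range (n + 1),
          |q| ^ ((n - k) * ℓ) * lam ^ (((k : ℝ) - (ℓ : ℝ)) / 2)
        ≤ B := by
  obtain ⟨hq1, hq2⟩ := hq
  obtain ⟨hl1, hl2⟩ := hlam
  set r := |q| with hrdef
  have hr0 : 0 ≤ r := abs_nonneg q
  have hr1 : r < 1 := abs_lt.mpr ⟨hq1, hq2⟩
  set s := lam ^ ((1:ℝ)/2) with hsdef
  have hs0 : 0 < s := Real.rpow_pos_of_pos hl1 _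
  have hs1 : s < 1 := Real.rpow_lt_one hl1.le hl2 (by norm_num)
  have hssqrt : s < Real.sqrt s := (Real.lt_sqrt hs0.le).mpr (by nlinarith)
  set β := max r (Real.sqrt s) with hβdef
  have hβ0 : 0 < β := lt_of_lt_of_le (Real.sqrt_pos.mpr hs0) (le_max_right _ _)
  have hβ1 : β < 1 := max_lt hr1 ((Real.sqrt_lt' one_pos).mpr (by nlinarith))
  have hrβ : r ≤ β := le_max_left _ _
  have hsβ : s < β := hssqrt.trans_le (le_max_right _ _)
  have hγ0 : 0 ≤ s / β := by positivity
  have hγ1 : s / β < 1 := (div_lt_one hβ0).mpr hsβ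
  have hκ0 : (0:ℝ) < s ^ 2 * β := by positivity
  obtain ⟨N, hN⟩ := exists_pow_lt_of_lt_one hκ0 hr1
  set C := ((s ^ 2 * β)⁻¹) ^ N with hCdef
  have hC0 : 0 < C := by positivity
  have hrpow : ∀ k ℓ : ℕ, lam ^ (((k : ℝ) - (ℓ : ℝ)) / 2) = s ^ k / s ^ ℓ := by
    intro k ℓ
    rw [show ((k : ℝ) - (ℓ : ℝ)) / 2 = (1/2) * (k:ℝ) - (1/2) * (ℓ:ℝ) by ring,
      Real.rpow_sub hl1, Real.rpow_mul hl1.le, Real.rpow_mul hl1.le,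
      Real.rpow_natCast, Real.rpow_natCast]
  have h1γ : (0:ℝ) < 1 - s / β := by linarith
  have h1β : (0:ℝ) < 1 - β := by linarith
  refine ⟨C * (2 / (1 - s / β)) * (2 / (1 - β)), by positivity, fun n => ?_⟩
  calc ∑ k ∈ Finset.range (n + 1), ∑ ℓ ∈ Finset.range (n + 1),
        r ^ ((n - k) * ℓ) * lam ^ (((k : ℝ) - (ℓ : ℝ)) / 2)
      ≤ ∑ k ∈ Finset.range (n + 1), ∑ ℓ ∈ Finset.range (n + 1),
        C * ((s / β) ^ (Nat.dist k ℓ) * β ^ (min k (n - k))) := by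
        refine Finset.sum_le_sum fun k hk => Finset.sum_le_sum fun ℓ hℓ => ?_
        simp only [Finset.mem_range] at hk hℓ
        rw [hrpow k ℓ]
        exact keylem r s β N hr0 hrβ hs0 hs1.le hβ0 hβ1.le hN.le
          (by omega) (by omega)
    _ = ∑ k ∈ Finset.range (n + 1), (C * β ^ (min k (n - k))) *
          ∑ ℓ ∈ Finset.range (n + 1), (s / β) ^ (Nat.dist k ℓ) := by
        refine Finset.sum_congr rfl fun k _ => ?_
        rw [Finset.mul_sum]
        exact Finset.sum_congr rfl fun ℓ _ => by ring
    _ ≤ ∑ k ∈ Finset.range (n + 1), (C * β ^ (min k (n - k))) * (2 / (1 - s / β)) := by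
        refine Finset.sum_le_sum fun k hk => ?_
        simp only [Finset.mem_range] at hk
        exact mul_le_mul_of_nonneg_left (distsum hγ0 hγ1 (by omega)) (by positivity)
    _ = (C * (2 / (1 - s / β))) * ∑ k ∈ Finset.range (n + 1), β ^ (min k (n - k)) := by
        rw [Finset.mul_sum]
        exact Finset.sum_congr rfl fun k _ => by ring
    _ ≤ (C * (2 / (1 - s / β))) * (2 / (1 - β)) :=
        mul_le_mul_of_nonneg_left (minsum hβ0.le hβ1 n) (by positivity)
end
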